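/- (Faithfulness step in the proof of Theorem 4.5, giving injectivity of id ⊗ Λ_ϖ.) Let A be a complex C*-algebra, E a complex inner product space whose inner product ⟪·,·⟫ is conjugate-linear in the first variable, and ϖ a faithful state on A. If, for families ξ : Fin n → E and a : Fin n → A, one has Σ_{i,j} ⟪ξ_i, ξ_j⟫ · ϖ(a_i* · a_j) = 0, then Σ_{i,j} ⟪ξ_i, ξ_j⟫ • (a_i* · a_j) = 0 in A. -/

import Mathlib

open scoped ComplexOrder

/-- The faithfulness step in the proof of Theorem 4.5 (injectivity of `id ⊗ Λ_ϖ`).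
Let `A` be a complex C*-algebra, `E` a complex inner product space, and `ϖ` a faithful
state on `A`.  If `Σ_{i,j} ⟪ξ i, ξ j⟫ · ϖ((a i)* * a j) = 0`, then the Gram element
`Σ_{i,j} ⟪ξ i, ξ j⟫ • ((a i)* * a j)` vanishes in `A`. -/
theorem gram_state_faithful
    {A : Type} [NormedRing A] [StarRing A] [CStarRing A] [CompleteSpace A]
    [NormedAlgebra ℂ A] [StarModule ℂ A]
    {E : Type} [NormedAddCommGroup E] [InnerProductSpace ℂ E]
    (ϖ : A →ₗ[ℂ] ℂ)
    (hpos : ∀ a : A, 0 ≤ ϖ (star a * a))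
    (hnorm : ∀ a : A, ‖ϖ a‖ ≤ ‖a‖)
    (hfaithful : ∀ a : A, ϖ (star a * a) = 0 → a = 0)
    (n : ℕ) (ξ : Fin n → E) (a : Fin n → A)
    (hzero : ∑ i : Fin n, ∑ j : Fin n, (inner ℂ (ξ i) (ξ j) : ℂ) * ϖ (star (a i) * a j) = 0) :
    ∑ i : Fin n, ∑ j : Fin n, (inner ℂ (ξ i) (ξ j) : ℂ) • (star (a i) * a j) = 0 := by
  classical
  set M : Matrix (Fin n) (Fin n) ℂ := Matrix.of fun i j => (inner ℂ (ξ i) (ξ j) : ℂ) with hMdef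
  have hPSD : M.PosSemidef := by
    refine Matrix.posSemidef_iff_dotProduct_mulVec.mpr ⟨?_, ?_⟩
    · ext i j
      simp [hMdef, Matrix.conjTranspose_apply, inner_conj_symm]
    · intro x
      have hx : dotProduct (star x) (M.mulVec x)
          = (inner ℂ (∑ i, x i • ξ i) (∑ j, x j • ξ j) : ℂ) := by
        rw [sum_inner]
        simp only [inner_sum, inner_smul_left, inner_smul_right, dotProduct,
          Matrix.mulVec, hMdef, Matrix.of_apply, Pi.star_apply, Finset.mul_sum,
          RCLike.star_def]
        exact Finset.sum_congr rfl fun i _ => Finset.sum_congr rfl fun j _ => by ring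
      rw [hx, @inner_self_eq_norm_sq_to_K ℂ]
      exact pow_nonneg (Complex.zero_le_real.2 (norm_nonneg (∑ i, x i • ξ i))) 2
  open scoped MatrixOrder in
  obtain ⟨B, hB⟩ := CStarAlgebra.nonneg_iff_eq_star_mul_self.mp hPSD.nonneg
  set b : Fin n → A := fun k => ∑ j, B k j • a j with hbdef
  have hM : ∀ i j, M i j = ∑ k, star (B k i) * B k j := by
    intro i j
    rw [hB]
    simp [Matrix.mul_apply, Matrix.conjTranspose_apply, Matrix.star_eq_conjTranspose]
  have hterm : ∀ k, star (b k) * b k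
      = ∑ i, ∑ j, (star (B k i) * B k j) • (star (a i) * a j) := by
    intro k
    rw [hbdef]
    simp only [star_sum, star_smul, Finset.sum_mul, Finset.mul_sum]
    rw [Finset.sum_comm]
    refine Finset.sum_congr rfl fun i _ => Finset.sum_congr rfl fun j _ => ?_
    rw [smul_mul_smul_comm]
  have key : ∑ i, ∑ j, M i j • (star (a i) * a j) = ∑ k, star (b k) * b k := by
    calc ∑ i, ∑ j, M i j • (star (a i) * a j)
        = ∑ i, ∑ j, ∑ k, (star (B k i) * B k j) • (star (a i) * a j) := by
          refine Finset.sum_congr rfl fun i _ => Finset.sum_congr rfl fun j _ => ?_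
          rw [hM, Finset.sum_smul]
      _ = ∑ i, ∑ k, ∑ j, (star (B k i) * B k j) • (star (a i) * a j) :=
          Finset.sum_congr rfl fun i _ => Finset.sum_comm
      _ = ∑ k, ∑ i, ∑ j, (star (B k i) * B k j) • (star (a i) * a j) :=
          Finset.sum_comm
      _ = ∑ k, star (b k) * b k :=
          Finset.sum_congr rfl fun k _ => (hterm k).symm
  have hϖ : ∑ k, ϖ (star (b k) * b k) = 0 := by
    have h1 := congrArg ϖ key
    simp only [map_sum, map_smul, smul_eq_mul] at h1
    rw [← h1]
    simpa [hMdef] using hzero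
  have hzk : ∀ k ∈ Finset.univ, ϖ (star (b k) * b k) = 0 :=
    (Finset.sum_eq_zero_iff_of_nonneg fun k _ => hpos (b k)).mp hϖ
  have hbk : ∀ k, b k = 0 := fun k => hfaithful _ (hzk k (Finset.mem_univ k))
  have hfin : ∑ i, ∑ j, M i j • (star (a i) * a j) = 0 := by
    rw [key]
    simp [hbk]
  simpa [hMdef] using hfin
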